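/- arXiv:2307.06654 — 2 statements merged into one kernel-verified Lean document; each statement's English description precedes it below -/
import Mathlib

section
/- There exists an RC layout that is optimal to the SIPP: if the SIPP instance has any feasible layout, then there is an RC layout A with W(A) ≤ b whose height H(A) equals the minimum of H over all layouts (of all dimensions) with width at most b. -/
/-- A `p × q` layout: a matrix whose entries are exactly the integers `1, …, p*q`. -/
def IsLayout (p q : ℕ) (A : Fin p → Fin q → ℕ) : Prop :=
  Function.Injective (fun ij : Fin p × Fin q => A ij.1 ij.2) ∧
  (Set.range fun ij : Fin p × Fin q => A ij.1 ij.2) = Set.Icc 1 (p * q)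

/-- Width of a layout with respect to side lengths `l`. -/
def layW (l : ℕ → ℕ) {p q : ℕ} (A : Fin p → Fin q → ℕ) : ℕ :=
  ∑ j : Fin q, Finset.univ.sup fun i : Fin p => l (A i j)

/-- Height of a layout with respect to side lengths `l`. -/
def layH (l : ℕ → ℕ) {p q : ℕ} (A : Fin p → Fin q → ℕ) : ℕ :=
  ∑ i : Fin p, Finset.univ.sup fun j : Fin q => l (A i j)

/-- RC layouts: obtainable from the 1×1 base layout by add-row and add-column operations. -/
inductive IsRC : {p q : ℕ} → (Fin p → Fin q → ℕ) → Prop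
  | base : IsRC (fun (_ : Fin 1) (_ : Fin 1) => 1)
  | addRow {p q : ℕ} {A : Fin p → Fin q → ℕ} (h : IsRC A) :
      IsRC (fun (i : Fin (p + 1)) (j : Fin q) =>
        if hi : (i : ℕ) < p then A ⟨i, hi⟩ j else p * q + (j : ℕ) + 1)
  | addCol {p q : ℕ} {A : Fin p → Fin q → ℕ} (h : IsRC A) :
      IsRC (fun (i : Fin p) (j : Fin (q + 1)) =>
        if hj : (j : ℕ) < q then A i ⟨j, hj⟩ else p * q + (i : ℕ) + 1)

/-!
Given a layout `B`, sort its row minima `r₀ ≤ r₁ ≤ ⋯` and its column minima `c₀ ≤ c₁ ≤ ⋯`.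
Every entry `e < x` of `B` lies in a row and a column whose minima are `< x`, hence
`x - 1 ≤ #{i | rᵢ < x} * #{j | cⱼ < x}`. This is exactly the room needed to build an RC layout of
the same shape by appending rows and columns in increasing order of these minima, so that every
entry of row `i` is at least `rᵢ` and every entry of column `j` at least `cⱼ`. As `l` is antitone,
that RC layout is neither wider nor higher than `B`; applying this to a feasible layout of minimal
height proves the theorem.
-/

open Finset Function

section

variable {p q : ℕ}

def appendRow (A : Fin p → Fin q → ℕ) : Fin (p + 1) → Fin q → ℕ :=
  fun i j => if hi : (i : ℕ) < p then A ⟨i, hi⟩ j else p * q + (j : ℕ) + 1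

def appendCol (A : Fin p → Fin q → ℕ) : Fin p → Fin (q + 1) → ℕ :=
  fun i j => if hj : (j : ℕ) < q then A i ⟨j, hj⟩ else p * q + (i : ℕ) + 1

theorem swap_appendRow (A : Fin p → Fin q → ℕ) :
    swap (appendRow A) = appendCol (swap A) := by
  funext j i
  simp [appendRow, appendCol, swap, mul_comm]

theorem swap_appendCol (A : Fin p → Fin q → ℕ) :
    swap (appendCol A) = appendRow (swap A) := by
  funext j i
  simp [appendRow, appendCol, swap, mul_comm]

theorem IsRC.swap {A : Fin p → Fin q → ℕ} (h : IsRC A) : IsRC (swap A) := by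
  induction h with
  | base => exact .base
  | addRow _ ih =>
    change IsRC (Function.swap (appendRow _))
    rw [swap_appendRow]
    exact ih.addCol
  | addCol _ ih =>
    change IsRC (Function.swap (appendCol _))
    rw [swap_appendCol]
    exact ih.addRow

theorem IsLayout.mem {A : Fin p → Fin q → ℕ} (h : IsLayout p q A) (i : Fin p)
    (j : Fin q) : A i j ∈ Set.Icc 1 (p * q) :=
  h.2 ▸ ⟨(i, j), rfl⟩

theorem IsLayout.exists_eq {A : Fin p → Fin q → ℕ} (h : IsLayout p q A) {e : ℕ}
    (he : e ∈ Set.Icc 1 (p * q)) : ∃ i j, A i j = e := by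
  obtain ⟨⟨i, j⟩, hij⟩ := h.2.symm ▸ he
  exact ⟨i, j, hij⟩

theorem isLayout_of_injective {A : Fin p → Fin q → ℕ}
    (hinj : Injective fun ij : Fin p × Fin q => A ij.1 ij.2)
    (hmem : ∀ i j, A i j ∈ Set.Icc 1 (p * q)) : IsLayout p q A := by
  refine ⟨hinj, ?_⟩
  have himage : univ.image (fun ij : Fin p × Fin q => A ij.1 ij.2) = Icc 1 (p * q) := by
    refine eq_of_subset_of_card_le ?_ ?_
    · intro e he
      obtain ⟨⟨i, j⟩, -, rfl⟩ := mem_image.1 he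
      simpa using hmem i j
    · simp [card_image_of_injective _ hinj]
  simpa using congrArg (fun s : Finset ℕ => (s : Set ℕ)) himage

theorem IsLayout.swap {A : Fin p → Fin q → ℕ} (h : IsLayout p q A) :
    IsLayout q p (swap A) :=
  isLayout_of_injective (h.1.comp Prod.swap_injective) fun j i => mul_comm p q ▸ h.mem i j

theorem IsLayout.appendRow {A : Fin p → Fin q → ℕ} (h : IsLayout p q A) :
    IsLayout (p + 1) q (appendRow A) := by
  have hpq : (p + 1) * q = p * q + q := add_one_mul p q
  refine isLayout_of_injective ?_ fun i j => ?_
  · rintro ⟨i₁, j₁⟩ ⟨i₂, j₂⟩ he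
    dsimp only [_root_.appendRow] at he
    split_ifs at he with h₁ h₂ h₂
    · simpa [Fin.ext_iff] using h.1 (a₁ := (⟨i₁, h₁⟩, j₁)) (a₂ := (⟨i₂, h₂⟩, j₂)) he
    · have := (h.mem ⟨i₁, h₁⟩ j₁).2; omega
    · have := (h.mem ⟨i₂, h₂⟩ j₂).2; omega
    · simp only [Prod.mk.injEq, Fin.ext_iff]
      omega
  · simp only [_root_.appendRow]
    split_ifs with hi
    · have := h.mem ⟨i, hi⟩ j
      exact ⟨this.1, this.2.trans (by rw [hpq]; omega)⟩
    · exact ⟨by omega, by rw [hpq]; omega⟩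

theorem IsLayout.appendCol {A : Fin p → Fin q → ℕ} (h : IsLayout p q A) :
    IsLayout p (q + 1) (appendCol A) := by
  have := h.swap.appendRow.swap
  rwa [← swap_appendCol] at this

theorem IsRC.isLayout {A : Fin p → Fin q → ℕ} (h : IsRC A) : IsLayout p q A := by
  induction h with
  | base => exact isLayout_of_injective (fun _ _ _ => Subsingleton.elim _ _) fun _ _ => by simp
  | addRow _ ih => exact ih.appendRow
  | addCol _ ih => exact ih.appendCol

/-- Appending rows and columns in increasing order of their thresholds, row `i` comes after `i`
rows and at least `#{j | c j < r i}` columns, so its entries start above `i * #{j | c j < r i}`. -/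
def RowFits (r : Fin p → ℕ) (c : Fin q → ℕ) : Prop :=
  ∀ i, r i ≤ i * #{j | c j < r i} + 1

structure IsThresholdPair (r : Fin p → ℕ) (c : Fin q → ℕ) : Prop where
  monotone_row : Monotone r
  monotone_col : Monotone c
  rowFits : RowFits r c
  colFits : RowFits c r

def HasRCAbove (r : Fin p → ℕ) (c : Fin q → ℕ) : Prop :=
  ∃ A : Fin p → Fin q → ℕ, IsRC A ∧ ∀ i j, r i ≤ A i j ∧ c j ≤ A i j

theorem IsThresholdPair.symm {r : Fin p → ℕ} {c : Fin q → ℕ}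
    (h : IsThresholdPair r c) : IsThresholdPair c r :=
  ⟨h.monotone_col, h.monotone_row, h.colFits, h.rowFits⟩

theorem HasRCAbove.symm {r : Fin p → ℕ} {c : Fin q → ℕ} (h : HasRCAbove r c) :
    HasRCAbove c r :=
  let ⟨A, hA, hrc⟩ := h
  ⟨swap A, hA.swap, fun j i => (hrc i j).symm⟩

theorem card_filter_castSucc {n : ℕ} (P : Fin (n + 1) → Prop) [DecidablePred P]
    (hP : ¬ P (Fin.last n)) : #{i | P (Fin.castSucc i)} = #{i | P i} := by
  rw [card_filter, card_filter, Fin.sum_univ_castSucc, if_neg hP, add_zero]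

theorem RowFits.le_one {r : Fin (p + 1) → ℕ} {c : Fin q → ℕ} (h : RowFits r c) :
    r 0 ≤ 1 := by
  simpa using h 0

theorem IsThresholdPair.init {r : Fin (p + 2) → ℕ} {c : Fin (q + 1) → ℕ}
    (h : IsThresholdPair r c) (hc : ∀ j ≠ 0, c j ≤ r (Fin.last _)) :
    IsThresholdPair (Fin.init r) c where
  monotone_row := h.monotone_row.comp Fin.strictMono_castSucc.monotone
  monotone_col := h.monotone_col
  rowFits i := by
    have := h.rowFits i.castSucc
    rwa [Fin.val_castSucc] at this
  colFits j := by
    rcases eq_or_ne j 0 with rfl | hj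
    · simpa using h.colFits.le_one
    · have hlast : ¬ r (Fin.last _) < c j := (hc j hj).not_gt
      have := h.colFits j
      rw [← card_filter_castSucc (fun i => r i < c j) hlast] at this
      exact this

theorem HasRCAbove.appendRow {r : Fin (p + 1) → ℕ} {c : Fin q → ℕ}
    (h : HasRCAbove (Fin.init r) c)
    (hlast : ∀ j : Fin q, r (Fin.last p) ≤ p * q + j + 1 ∧ c j ≤ p * q + j + 1) :
    HasRCAbove r c := by
  obtain ⟨A, hA, hrc⟩ := h
  refine ⟨_root_.appendRow A, hA.addRow, fun i j => ?_⟩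
  simp only [_root_.appendRow]
  split_ifs with hi
  · exact hrc ⟨i, hi⟩ j
  · obtain rfl : i = Fin.last p := Fin.ext (by rw [Fin.val_last]; omega)
    exact hlast j

theorem IsThresholdPair.hasRCAbove_of_init {r : Fin (p + 2) → ℕ}
    {c : Fin (q + 1) → ℕ} (h : IsThresholdPair r c) (hc : ∀ j ≠ 0, c j ≤ r (Fin.last _))
    (ih : HasRCAbove (Fin.init r) c) : HasRCAbove r c := by
  have hr : r (Fin.last _) ≤ (p + 1) * (q + 1) + 1 := by
    have hcard : #{j | c j < r (Fin.last _)} ≤ q + 1 := by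
      simpa using card_filter_le univ fun j => c j < r (Fin.last _)
    have := h.rowFits (Fin.last _)
    simp only [Fin.val_last] at this
    nlinarith
  refine ih.appendRow fun j => ⟨by omega, ?_⟩
  rcases eq_or_ne j 0 with rfl | hj
  · exact h.colFits.le_one.trans (by omega)
  · have := hc j hj; omega

theorem IsThresholdPair.hasRCAbove {r : Fin (p + 1) → ℕ} {c : Fin (q + 1) → ℕ}
    (h : IsThresholdPair r c) : HasRCAbove r c := by
  induction hn : p + q generalizing p q with
  | zero =>
    obtain ⟨rfl, rfl⟩ : p = 0 ∧ q = 0 := by omega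
    refine ⟨_, .base, fun i j => ?_⟩
    rw [Fin.fin_one_eq_zero i, Fin.fin_one_eq_zero j]
    exact ⟨h.rowFits.le_one, h.colFits.le_one⟩
  | succ n ih =>
    by_cases hrow : 0 < p ∧ ∀ j ≠ 0, c j ≤ r (Fin.last p)
    · obtain ⟨p, rfl⟩ := Nat.exists_eq_add_one.2 hrow.1
      exact h.hasRCAbove_of_init hrow.2 (ih (h.init hrow.2) (by omega))
    · have hcol : 0 < q ∧ ∀ i ≠ 0, r i ≤ c (Fin.last q) := by
        rcases Nat.eq_zero_or_pos p with rfl | hp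
        · exact ⟨by omega, fun i hi => absurd (Fin.fin_one_eq_zero i) hi⟩
        push Not at hrow
        obtain ⟨j, hj, hlt⟩ := hrow hp
        refine ⟨Nat.pos_of_ne_zero ?_, fun i _ => ?_⟩
        · rintro rfl
          exact hj (Fin.fin_one_eq_zero j)
        · exact (h.monotone_row (Fin.le_last i)).trans
            (hlt.le.trans (h.monotone_col (Fin.le_last j)))
      obtain ⟨q, rfl⟩ := Nat.exists_eq_add_one.2 hcol.1
      exact (h.symm.hasRCAbove_of_init hcol.2 (ih (h.symm.init hcol.2) (by omega))).symm

def rowMin (B : Fin p → Fin (q + 1) → ℕ) (i : Fin p) : ℕ :=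
  univ.inf' univ_nonempty (B i)

theorem rowMin_le (B : Fin p → Fin (q + 1) → ℕ) (i : Fin p) (j : Fin (q + 1)) :
    rowMin B i ≤ B i j :=
  inf'_le _ (mem_univ j)

theorem exists_eq_rowMin (B : Fin p → Fin (q + 1) → ℕ) (i : Fin p) :
    ∃ j, B i j = rowMin B i :=
  let ⟨j, _, hj⟩ := exists_mem_eq_inf' univ_nonempty (B i)
  ⟨j, hj.symm⟩

def sortedRowMin (B : Fin p → Fin (q + 1) → ℕ) : Fin p → ℕ :=
  rowMin B ∘ Tuple.sort (rowMin B)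

theorem card_filter_lt_le_of_monotone {n : ℕ} {f : Fin n → ℕ} (hf : Monotone f) (i : Fin n) :
    #{j | f j < f i} ≤ i := by
  calc #{j | f j < f i} ≤ #(Iio i) :=
        card_le_card fun j hj => mem_Iio.2 (hf.reflect_lt (mem_filter.1 hj).2)
    _ = i := Fin.card_Iio i

theorem card_filter_comp_perm {n : ℕ} (σ : Equiv.Perm (Fin n)) (P : Fin n → Prop)
    [DecidablePred P] : #{i | P (σ i)} = #{i | P i} :=
  card_equiv σ (by simp)

theorem IsLayout.sub_one_le_card_mul_card {B : Fin (p + 1) → Fin (q + 1) → ℕ}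
    (hB : IsLayout (p + 1) (q + 1) B) {x : ℕ} (hx : x ≤ (p + 1) * (q + 1) + 1) :
    x - 1 ≤ #{i | rowMin B i < x} * #{j | rowMin (Function.swap B) j < x} := by
  have hsurj : Set.SurjOn (fun ij : Fin (p + 1) × Fin (q + 1) => B ij.1 ij.2)
      ↑((univ.filter fun i => rowMin B i < x) ×ˢ
        (univ.filter fun j => rowMin (Function.swap B) j < x)) ↑(Ico 1 x) := by
    intro y hy
    obtain ⟨hy₁, hy₂⟩ := mem_Ico.1 hy
    obtain ⟨i, j, rfl⟩ := hB.exists_eq ⟨hy₁, by omega⟩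
    refine ⟨(i, j), ?_, rfl⟩
    simp only [coe_product, Set.mem_prod, coe_filter, Set.mem_ofPred_eq, mem_univ, true_and]
    exact ⟨(rowMin_le B i j).trans_lt hy₂, (rowMin_le (Function.swap B) j i).trans_lt hy₂⟩
  simpa [card_product] using card_le_card_of_surjOn _ hsurj

theorem IsLayout.rowFits_sortedRowMin {B : Fin (p + 1) → Fin (q + 1) → ℕ}
    (hB : IsLayout (p + 1) (q + 1) B) :
    RowFits (sortedRowMin B) (sortedRowMin (Function.swap B)) := by
  intro i
  set x := sortedRowMin B i
  have hx : x ≤ (p + 1) * (q + 1) := by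
    obtain ⟨j, hj⟩ := exists_eq_rowMin B (Tuple.sort (rowMin B) i)
    exact hj.symm.le.trans (hB.mem _ j).2
  have hrows : #{i' | rowMin B i' < x} ≤ i := by
    rw [← card_filter_comp_perm (Tuple.sort (rowMin B))]
    exact card_filter_lt_le_of_monotone (Tuple.monotone_sort (rowMin B)) i
  have hcols : #{j | rowMin (Function.swap B) j < x} =
      #{j | sortedRowMin (Function.swap B) j < x} :=
    (card_filter_comp_perm _ _).symm
  have := hB.sub_one_le_card_mul_card (x := x) (by omega)
  rw [hcols] at this
  have := Nat.mul_le_mul_right #{j | sortedRowMin (Function.swap B) j < x} hrows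
  omega

theorem IsLayout.isThresholdPair {B : Fin (p + 1) → Fin (q + 1) → ℕ}
    (hB : IsLayout (p + 1) (q + 1) B) :
    IsThresholdPair (sortedRowMin B) (sortedRowMin (Function.swap B)) :=
  ⟨Tuple.monotone_sort _, Tuple.monotone_sort _, hB.rowFits_sortedRowMin,
    hB.swap.rowFits_sortedRowMin⟩

theorem layH_le_layH_of_rowMin_le {l : ℕ → ℕ} (hl : AntitoneOn l (Set.Ici 1)) {q' : ℕ}
    {A : Fin p → Fin q' → ℕ} {B : Fin p → Fin (q + 1) → ℕ} (hB : ∀ i j, 1 ≤ B i j)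
    (σ : Equiv.Perm (Fin p)) (h : ∀ i j, rowMin B (σ i) ≤ A i j) : layH l A ≤ layH l B := by
  have hpos : ∀ i, 1 ≤ rowMin B i := fun i =>
    let ⟨j, hj⟩ := exists_eq_rowMin B i
    hj ▸ hB i j
  calc layH l A ≤ ∑ i, l (rowMin B (σ i)) :=
        sum_le_sum fun i _ => Finset.sup_le fun j _ =>
          hl (hpos _) ((hpos _).trans (h i j)) (h i j)
    _ = ∑ i, l (rowMin B i) := Equiv.sum_comp σ fun i => l (rowMin B i)
    _ ≤ layH l B := sum_le_sum fun i _ =>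
          let ⟨j, hj⟩ := exists_eq_rowMin B i
          hj ▸ le_sup (f := fun j => l (B i j)) (mem_univ j)

theorem IsLayout.exists_isRC_le {l : ℕ → ℕ} (hl : AntitoneOn l (Set.Ici 1))
    {B : Fin (p + 1) → Fin (q + 1) → ℕ} (hB : IsLayout (p + 1) (q + 1) B) :
    ∃ A : Fin (p + 1) → Fin (q + 1) → ℕ, IsRC A ∧ layW l A ≤ layW l B ∧ layH l A ≤ layH l B := by
  obtain ⟨A, hA, hAB⟩ := hB.isThresholdPair.hasRCAbove
  have hpos : ∀ i j, 1 ≤ B i j := fun i j => (hB.mem i j).1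
  -- `layW l A` is by definition `layH l (swap A)`.
  exact ⟨A, hA,
    layH_le_layH_of_rowMin_le (A := Function.swap A) (B := Function.swap B) hl
      (fun j i => hpos i j) _ fun j i => (hAB i j).2,
    layH_le_layH_of_rowMin_le hl hpos _ fun i j => (hAB i j).1⟩

end

theorem rc_layout_optimal_general (n b : ℕ) (l : ℕ → ℕ)
    (hmono : ∀ a c, 1 ≤ a → a ≤ c → c ≤ n → l c ≤ l a)
    (hzero : ∀ k, n < k → l k = 0)
    (hfeas : ∃ (p q : ℕ) (A : Fin p → Fin q → ℕ),
      n ≤ p * q ∧ IsLayout p q A ∧ layW l A ≤ b) :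
    ∃ (p q : ℕ) (A : Fin p → Fin q → ℕ),
      n ≤ p * q ∧ IsLayout p q A ∧ IsRC A ∧ layW l A ≤ b ∧
      ∀ (p' q' : ℕ) (B : Fin p' → Fin q' → ℕ),
        n ≤ p' * q' → IsLayout p' q' B → layW l B ≤ b → layH l A ≤ layH l B := by
  classical
  have hl : AntitoneOn l (Set.Ici 1) := fun a ha c _ hac => by
    by_cases hc : c ≤ n
    · exact hmono a c ha hac hc
    · simp [hzero c (by omega)]
  rcases Nat.eq_zero_or_pos n with rfl | hn
  · have hl1 : l 1 = 0 := hzero 1 one_pos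
    exact ⟨1, 1, _, Nat.zero_le _, IsRC.base.isLayout, .base, by simp [layW, hl1],
      fun _ _ _ _ _ _ => by simp [layH, hl1]⟩
  have hex : ∃ h, ∃ (p q : ℕ) (B : Fin p → Fin q → ℕ),
      n ≤ p * q ∧ IsLayout p q B ∧ layW l B ≤ b ∧ layH l B = h :=
    let ⟨p, q, B, hB⟩ := hfeas
    ⟨_, p, q, B, hB.1, hB.2.1, hB.2.2, rfl⟩
  obtain ⟨p, q, B, hnB, hB, hWB, hHB⟩ := Nat.find_spec hex
  obtain ⟨hp, hq⟩ := CanonicallyOrderedAdd.mul_pos.1 (hn.trans_le hnB)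
  obtain ⟨p, rfl⟩ := Nat.exists_eq_add_one.2 hp
  obtain ⟨q, rfl⟩ := Nat.exists_eq_add_one.2 hq
  obtain ⟨A, hA, hWA, hHA⟩ := hB.exists_isRC_le hl
  refine ⟨_, _, A, hnB, hA.isLayout, hA, hWA.trans hWB, fun p' q' B' hn' hB' hWB' => ?_⟩
  calc layH l A ≤ layH l B := hHA
    _ = Nat.find hex := hHB
    _ ≤ layH l B' := Nat.find_min' hex ⟨p', q', B', hn', hB', hWB', rfl⟩

/-- If the SIPP instance has any feasible layout, then there is an RC
feasible layout whose height equals the minimum height over all feasible layouts. -/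
theorem rc_layout_optimal (n b : ℕ) (l : ℕ → ℕ)
    (hmono : ∀ a c, 1 ≤ a → a ≤ c → c ≤ n → l c ≤ l a)
    (hpos : ∀ k, 1 ≤ k → k ≤ n → 0 < l k)
    (hzero : ∀ k, n < k → l k = 0)
    (hfeas : ∃ (p q : ℕ) (A : Fin p → Fin q → ℕ),
      n ≤ p * q ∧ IsLayout p q A ∧ layW l A ≤ b) :
    ∃ (p q : ℕ) (A : Fin p → Fin q → ℕ),
      n ≤ p * q ∧ IsLayout p q A ∧ IsRC A ∧ layW l A ≤ b ∧
      ∀ (p' q' : ℕ) (B : Fin p' → Fin q' → ℕ),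
        n ≤ p' * q' → IsLayout p' q' B → layW l B ≤ b → layH l A ≤ layH l B :=
  rc_layout_optimal_general n b l hmono hzero hfeas
end

section
/- Approximation guarantee of the FPTAS scaling step: let l_1 ≥ l_2 ≥ … ≥ l_n > 0 be integer side lengths (extended by 0 beyond n), b a strip width, and ε > 0. Set t = max{ε·l_1/n, 1} and define the scaled instance by w_i = l_i and h_i = ⌈l_i / t⌉ for each i. Let Ā be any layout with W(Ā) ≤ b that minimizes the scaled height H_h among all layouts of width at most b. Then Ā is feasible for the original instance and its original height satisfies H_l(Ā) ≤ (1+ε) · min{ H_l(A) : A a layout with W(A) ≤ b }. -/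
open Finset

lemma mul_natCast_sup_le {ι : Type*} {s : Finset ι} {f : ι → ℕ} {c x : ℝ} (hc : 0 ≤ c)
    (hx : 0 ≤ x) (hf : ∀ i ∈ s, c * f i ≤ x) : c * ((s.sup f : ℕ) : ℝ) ≤ x :=
  sup_induction (p := fun m : ℕ => c * m ≤ x) (by simpa using hx)
    (fun a ha b hb => by rw [Nat.cast_max, mul_max_of_nonneg _ _ hc]; exact max_le ha hb) hf

lemma le_mul_natCeil_div (x : ℝ) {t : ℝ} (ht : 0 < t) : x ≤ t * ⌈x / t⌉₊ :=
  (div_le_iff₀' ht).1 (Nat.le_ceil _)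

lemma mul_natCeil_div_lt {x t : ℝ} (hx : 0 ≤ x) (ht : 0 < t) : t * ⌈x / t⌉₊ < x + t :=
  calc t * ⌈x / t⌉₊ < t * (x / t + 1) := by
        gcongr; exact Nat.ceil_lt_add_one (div_nonneg hx ht.le)
    _ = x + t := by field_simp

lemma mul_sup_le_sup_add {ι : Type*} (s : Finset ι) (v : ι → ℕ) {f g : ℕ → ℕ} {n : ℕ} {c : ℝ}
    (hc : 0 ≤ c) (hgf : ∀ k, c * g k ≤ f k + c) (hg : ∀ k, n < k → g k = 0) :
    c * ((s.sup (g ∘ v) : ℕ) : ℝ) ≤ (s.sup (f ∘ v) : ℕ) + ∑ j ∈ s, if v j ≤ n then c else 0 := by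
  have hsum : ∀ j ∈ s, (0 : ℝ) ≤ if v j ≤ n then c else 0 := fun j _ => by
    split_ifs <;> simp [hc]
  refine mul_natCast_sup_le hc (by positivity) fun j hj => ?_
  by_cases hjn : v j ≤ n
  · calc c * g (v j) ≤ f (v j) + c := hgf _
      _ ≤ s.sup (f ∘ v) + ∑ j ∈ s, if v j ≤ n then c else 0 := by
        gcongr
        · exact_mod_cast le_sup (f := f ∘ v) hj
        · simpa [hjn] using single_le_sum hsum hj
  · simp only [Function.comp_apply, hg _ (not_le.1 hjn), Nat.cast_zero, mul_zero]
    exact add_nonneg (Nat.cast_nonneg _) (sum_nonneg hsum)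

section Layout

variable {p q : ℕ} {A : Fin p → Fin q → ℕ}

lemma IsLayout.one_le (hA : IsLayout p q A) (i : Fin p) (j : Fin q) : 1 ≤ A i j :=
  (hA.2.subset ⟨(i, j), rfl⟩).1

lemma IsLayout.card_filter_le (hA : IsLayout p q A) (n : ℕ) :
    #{ij : Fin p × Fin q | A ij.1 ij.2 ≤ n} ≤ n := by
  simpa using card_le_card_of_injOn (fun ij : Fin p × Fin q => A ij.1 ij.2) (t := Icc 1 n)
    (fun ij hij => mem_Icc.2 ⟨hA.one_le _ _, (mem_filter.1 hij).2⟩) hA.1.injOn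

lemma le_layH (f : ℕ → ℕ) (A : Fin p → Fin q → ℕ) (i : Fin p) (j : Fin q) :
    f (A i j) ≤ layH f A :=
  (le_sup (f := fun j => f (A i j)) (mem_univ j)).trans
    (single_le_sum (f := fun i => univ.sup fun j => f (A i j)) (fun _ _ => Nat.zero_le _)
      (mem_univ i))

lemma IsLayout.le_layH_one (hA : IsLayout p q A) (hpq : 1 ≤ p * q) (f : ℕ → ℕ) :
    f 1 ≤ layH f A := by
  obtain ⟨⟨i, j⟩, hij⟩ : 1 ∈ Set.range fun ij : Fin p × Fin q => A ij.1 ij.2 :=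
    hA.2 ▸ Set.mem_Icc.2 ⟨le_rfl, hpq⟩
  exact hij ▸ le_layH f A i j

lemma layH_le_mul_layH {f g : ℕ → ℕ} {c : ℝ} (hc : 0 ≤ c) (hfg : ∀ k, (f k : ℝ) ≤ c * g k)
    (A : Fin p → Fin q → ℕ) : (layH f A : ℝ) ≤ c * layH g A := by
  simp only [layH, Nat.cast_sum, mul_sum]
  gcongr with i
  simpa using mul_natCast_sup_le zero_le_one (by positivity) fun j _ =>
    (one_mul _).le.trans ((hfg _).trans (mul_le_mul_of_nonneg_left
      (by exact_mod_cast le_sup (f := fun j => g (A i j)) (mem_univ j)) hc))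

lemma mul_layH_le {f g : ℕ → ℕ} {n : ℕ} {c : ℝ} (hc : 0 ≤ c)
    (hgf : ∀ k, c * g k ≤ f k + c) (hg : ∀ k, n < k → g k = 0) (A : Fin p → Fin q → ℕ) :
    c * layH g A ≤ layH f A + c * #{ij : Fin p × Fin q | A ij.1 ij.2 ≤ n} := by
  calc c * (layH g A : ℝ)
      ≤ ∑ i, ((univ.sup fun j => f (A i j) : ℕ) + ∑ j, if A i j ≤ n then c else 0) := by
        simp only [layH, Nat.cast_sum, mul_sum]
        exact sum_le_sum fun i _ => mul_sup_le_sup_add univ (A i) hc hgf hg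
    _ = layH f A + c * #{ij : Fin p × Fin q | A ij.1 ij.2 ≤ n} := by
        rw [sum_add_distrib, ← Fintype.sum_prod_type', ← sum_filter, sum_const, nsmul_eq_mul,
          mul_comm, layH, Nat.cast_sum]

end Layout

theorem fptas_scaling_guarantee_general (n b : ℕ) (hn : 0 < n) (l : ℕ → ℕ)
    (hzero : ∀ k, n < k → l k = 0)
    (ε : ℝ) (hε : 0 < ε)
    (t : ℝ) (ht : t = max (ε * (l 1) / n) 1)
    (h : ℕ → ℕ) (hh : ∀ i, h i = (⌈(l i : ℝ) / t⌉).toNat)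
    (pb qb : ℕ) (Abar : Fin pb → Fin qb → ℕ)
    (hmin : ∀ (p q : ℕ) (A : Fin p → Fin q → ℕ),
      n ≤ p * q → IsLayout p q A → layW l A ≤ b → layH h Abar ≤ layH h A) :
    ∀ (p q : ℕ) (A : Fin p → Fin q → ℕ),
      n ≤ p * q → IsLayout p q A → layW l A ≤ b →
      (layH l Abar : ℝ) ≤ (1 + ε) * (layH l A : ℝ) := by
  intro p q A hpq hA hWA
  have ht0 : 0 < t := one_pos.trans_le (ht ▸ le_max_right _ _)
  have hh' : ∀ k, h k = ⌈(l k : ℝ) / t⌉₊ := fun k => by rw [hh, Int.ceil_toNat]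
  have hopt : (layH h Abar : ℝ) ≤ layH h A := by exact_mod_cast hmin p q A hpq hA hWA
  have hHA : (0 : ℝ) ≤ layH l A := Nat.cast_nonneg _
  rcases le_total (ε * l 1 / n) 1 with hsmall | hlarge
  · have hhl : h = l := funext fun k => by simp [hh', ht, max_eq_right hsmall]
    rw [hhl] at hopt
    nlinarith
  · have hnt : n * t = ε * l 1 := by
      rw [ht, max_eq_left hlarge]; field_simp
    calc (layH l Abar : ℝ) ≤ t * layH h Abar :=
          layH_le_mul_layH ht0.le (fun k => hh' k ▸ le_mul_natCeil_div _ ht0) Abar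
      _ ≤ t * layH h A := by gcongr
      _ ≤ layH l A + t * #{ij : Fin p × Fin q | A ij.1 ij.2 ≤ n} :=
          mul_layH_le ht0.le (fun k => hh' k ▸ (mul_natCeil_div_lt (Nat.cast_nonneg _) ht0).le)
            (fun k hk => by simp [hh', hzero k hk]) A
      _ ≤ layH l A + n * t := by
          rw [mul_comm (n : ℝ)]; gcongr; exact_mod_cast hA.card_filter_le n
      _ ≤ layH l A + ε * layH l A := by
          rw [hnt]; gcongr; exact_mod_cast hA.le_layH_one (hn.trans_le hpq) l
      _ = (1 + ε) * layH l A := by ring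

/-- Approximation guarantee of the FPTAS scaling step: if `Ā` is a feasible
layout minimizing the scaled height `H_h` (where `t = max (ε l₁ / n) 1` and
`h i = ⌈l i / t⌉`) among all feasible layouts, then `Ā` is feasible for the original instance
and `H_l(Ā) ≤ (1 + ε) · H_l(A)` for every feasible layout `A`; in particular
`H_l(Ā) ≤ (1 + ε)` times the optimal height. -/
theorem fptas_scaling_guarantee (n b : ℕ) (hn : 0 < n) (l : ℕ → ℕ)
    (hmono : ∀ a c, 1 ≤ a → a ≤ c → c ≤ n → l c ≤ l a)
    (hpos : ∀ k, 1 ≤ k → k ≤ n → 0 < l k)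
    (hzero : ∀ k, n < k → l k = 0)
    (ε : ℝ) (hε : 0 < ε)
    (t : ℝ) (ht : t = max (ε * (l 1) / n) 1)
    (h : ℕ → ℕ) (hh : ∀ i, h i = (⌈(l i : ℝ) / t⌉).toNat)
    (pb qb : ℕ) (Abar : Fin pb → Fin qb → ℕ)
    (hAbar : IsLayout pb qb Abar) (hpqb : n ≤ pb * qb) (hWb : layW l Abar ≤ b)
    (hmin : ∀ (p q : ℕ) (A : Fin p → Fin q → ℕ),
      n ≤ p * q → IsLayout p q A → layW l A ≤ b → layH h Abar ≤ layH h A) :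
    ∀ (p q : ℕ) (A : Fin p → Fin q → ℕ),
      n ≤ p * q → IsLayout p q A → layW l A ≤ b →
      (layH l Abar : ℝ) ≤ (1 + ε) * (layH l A : ℝ) :=
  fptas_scaling_guarantee_general n b hn l hzero ε hε t ht h hh pb qb Abar hmin
end
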